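/- Let σ and ρ be primitive substitutions on the two-letter alphabet 𝒜 = {a,b}. If σ^k ~ ρ^m for some integers k, m ≥ 1 (i.e., σ^k = γ_w ∘ ρ^m as endomorphisms of F₂ for some w ∈ F₂), then the hulls are equal: X_σ = X_ρ. -/

import Mathlib

open scoped Matrix

/-- The two-letter alphabet `𝒜 = {a, b}`; the letter `a` is `0` and the letter `b` is `1`. -/
abbrev A2 := Fin 2

/-- A substitution on the two-letter alphabet, given by the images of the two letters.
(The nonerasing condition is stated separately as `TwoSubst.NonErasing`.) -/
abbrev Subst := A2 → List A2

namespace TwoSubst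

/-- A substitution is non-erasing if the images of the letters are nonempty words. -/
def NonErasing (σ : Subst) : Prop := ∀ i : A2, σ i ≠ []

/-- The extension of a substitution to finite words (the morphism of the free monoid). -/
def apply (σ : Subst) (w : List A2) : List A2 := w.flatMap σ

/-- The `n`-th power `σ^n` of a substitution (as a substitution). -/
def substPow (σ : Subst) (n : ℕ) : Subst := fun i => (apply σ)^[n] [i]

/-- Composition of substitutions: `(σ ∘ τ)(i) = σ(τ(i))`. -/
def comp (σ τ : Subst) : Subst := fun i => apply σ (τ i)

/-- The substitution matrix `M_σ`: entry `(i, j)` is the number of occurrences of the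
letter `i` in `σ(j)`. -/
def M (σ : Subst) : Matrix (Fin 2) (Fin 2) ℤ := fun i j => ((σ j).count i : ℤ)

/-- A substitution is primitive if some power of its substitution matrix has all
entries positive. -/
def Primitive (σ : Subst) : Prop := ∃ n : ℕ, 0 < n ∧ ∀ i j, 0 < (M σ ^ n) i j

/-- A finite word, regarded as an element of the free group `F₂`. -/
def toFG (w : List A2) : FreeGroup A2 := (w.map FreeGroup.of).prod

/-- The endomorphism of the free group `F₂` induced by a substitution. -/
def endo (σ : Subst) : Monoid.End (FreeGroup A2) := FreeGroup.lift fun i => toFG (σ i)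

/-- A substitution is invertible if its extension to the free group `F₂` is an
automorphism of `F₂`. -/
def IsInvertible (σ : Subst) : Prop := Function.Bijective (endo σ)

/-- Two substitutions are conjugate, `σ ~ ρ`, if `σ = γ_w ∘ ρ` as endomorphisms of `F₂`
for some `w ∈ F₂`, where `γ_w x = w * x * w⁻¹`. -/
def Conj (σ ρ : Subst) : Prop := ∃ w : FreeGroup A2, ∀ x, endo σ x = w * endo ρ x * w⁻¹

/-- `w` is a (finite) factor of the bi-infinite word `u : ℤ → A2`. -/
def IsFactor (w : List A2) (u : ℤ → A2) : Prop :=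
  ∃ k : ℤ, w = (List.range w.length).map fun i => u (k + i)

/-- The hull `X_σ`: the set of bi-infinite words all of whose finite factors appear as
factors of `σ^n(a)` or `σ^n(b)` for some `n ∈ ℕ`. -/
def Hull (σ : Subst) : Set (ℤ → A2) :=
  { u | ∀ w : List A2, IsFactor w u → ∃ (n : ℕ) (x : A2), w <:+: substPow σ n x }

/-- The substitution `E : a ↦ b, b ↦ a`. -/
def Esub : Subst := ![[1], [0]]

/-- The substitution `L : a ↦ a, b ↦ ab`. -/
def Lsub : Subst := ![[0], [0, 1]]

/-- The composition `L^{a₁} ∘ E ∘ L^{a₂} ∘ E ∘ ⋯ ∘ E ∘ L^{a_m}` encoded by the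
nonempty list of exponents `a₁ :: [a₂, …, a_m]`. -/
def chain : ℕ → List ℕ → Subst
  | a, [] => substPow Lsub a
  | a, b :: rest => comp (substPow Lsub a) (comp Esub (chain b rest))

/-- The letter-exchange map `a ↦ b, b ↦ a` on letters. -/
def swapA : A2 → A2 := fun i => if i = 0 then 1 else 0

/-- The substitution matrix with real entries. -/
noncomputable def Mreal (σ : Subst) : Matrix (Fin 2) (Fin 2) ℝ := (M σ).map fun z => (z : ℝ)

/-- `lam` is the inflation factor (Perron–Frobenius eigenvalue) of `σ`: it is an
eigenvalue of `M_σ` admitting a positive eigenvector. -/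
def IsInflation (σ : Subst) (lam : ℝ) : Prop :=
  ∃ v : Fin 2 → ℝ, (∀ i, 0 < v i) ∧ (Mreal σ).mulVec v = lam • v

/-- `α` is the frequency of `σ`: `α ∈ (0,1)` and `(1-α, α)` is an eigenvector of `M_σ`
for an eigenvalue with positive eigenvector (necessarily the Perron-Frobenius
eigenvalue, i.e. the inflation factor, when `σ` is primitive). -/
def IsFreq (σ : Subst) (α : ℝ) : Prop :=
  0 < α ∧ α < 1 ∧ ∃ lam : ℝ, (Mreal σ).mulVec ![1 - α, α] = lam • ![1 - α, α]

/-- The automorphism `τ_a : a ↦ a⁻¹, b ↦ b` of the free group `F₂`. -/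
def tauA : Monoid.End (FreeGroup A2) :=
  FreeGroup.lift fun i : A2 => if i = 0 then (FreeGroup.of (0 : A2))⁻¹ else FreeGroup.of 1

/-- `ρ` is the reciprocal substitution `σ̄ = τ_a ∘ σ⁻¹ ∘ τ_a⁻¹` of `σ`, where
`φ` is the inverse automorphism `σ⁻¹` (note `τ_a⁻¹ = τ_a`). -/
def IsReciprocal (σ ρ : Subst) (φ : Monoid.End (FreeGroup A2)) : Prop :=
  (∀ x, φ (endo σ x) = x) ∧ (∀ x, endo σ (φ x) = x) ∧
    NonErasing ρ ∧ ∀ x, endo ρ x = tauA (φ (tauA x))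

/-- `σ` is a selfdual substitution (relative to its reciprocal `ρ = σ̄`):
`σ ~ σ̄` or `σ ~ E ∘ σ̄ ∘ E`. -/
def SelfDual (σ ρ : Subst) : Prop :=
  Conj σ ρ ∨ Conj σ (comp Esub (comp ρ Esub))

/-! ### Strands and dual maps -/

/-- Integer vectors in the plane. -/
abbrev V2 := Fin 2 → ℤ

/-- The abelianisation map `A : 𝒜* → ℤ²`, counting occurrences of each letter. -/
def Avec (w : List A2) : V2 := fun i => (w.count i : ℤ)

/-- The space `𝒢` (and its dual `𝒢*`): formal finite real linear combinations of the
basis elements `(W, i)` (resp. `(W, i*)`), `W ∈ ℤ²`, `i ∈ 𝒜`. -/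
abbrev Gspace := (V2 × A2) →₀ ℝ

/-- The image of the basis element `(W, i)` under `E₁(σ)`. -/
noncomputable def E1Basis (σ : Subst) (p : V2 × A2) : Gspace :=
  ∑ k ∈ Finset.range (σ p.2).length,
    Finsupp.single ((M σ).mulVec p.1 + Avec ((σ p.2).take k), (σ p.2).getD k p.2) (1 : ℝ)

/-- The one-dimensional extension `E₁(σ)`, as a linear map on `𝒢`. -/
noncomputable def E1 (σ : Subst) : Gspace →ₗ[ℝ] Gspace :=
  Finsupp.lift Gspace ℝ (V2 × A2) (E1Basis σ)

/-- The image of the basis element `(W, i*)` under the dual map `E₁*(σ)`: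
`E₁*(σ)(W, i*) = Σ_{j,k : σ(j)_k = i} (M_σ⁻¹·(W + A(σ(j)_{k+1}⋯σ(j)_{|σ(j)|})), j*)`. -/
noncomputable def E1starBasis (σ : Subst) (p : V2 × A2) : Gspace :=
  ∑ j : A2, ∑ k ∈ Finset.range (σ j).length,
    if (σ j).getD k j = p.2 then
      Finsupp.single ((M σ)⁻¹.mulVec (p.1 + Avec ((σ j).drop (k + 1))), j) (1 : ℝ)
    else 0

/-- The dual map `E₁*(σ)`, as a linear map on `𝒢*`. -/
noncomputable def E1star (σ : Subst) : Gspace →ₗ[ℝ] Gspace :=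
  Finsupp.lift Gspace ℝ (V2 × A2) (E1starBasis σ)

/-- The basis vector `e_a = (1,0)`. -/
def ea : V2 := ![1, 0]

/-- The basis vector `e_b = (0,1)`. -/
def eb : V2 := ![0, 1]

/-- `γ(0), …, γ(n)` is a finite dual strand: each step is `e_a` or `-e_b`. -/
def IsDualStrand (n : ℕ) (γ : ℕ → V2) : Prop :=
  ∀ k < n, γ (k + 1) - γ k = ea ∨ γ (k + 1) - γ k = -eb

/-- The element of `𝒢*` associated with a finite dual strand `γ(0), …, γ(n)`:
the sum of `(γ(k), b*)` over the `e_a`-steps and `(γ(k+1), a*)` over the `-e_b`-steps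
(the letter `a` is `0`, the letter `b` is `1`). -/
noncomputable def strandElem (n : ℕ) (γ : ℕ → V2) : Gspace :=
  ∑ k ∈ Finset.range n,
    if γ (k + 1) - γ k = ea then Finsupp.single (γ k, (1 : A2)) (1 : ℝ)
    else Finsupp.single (γ (k + 1), (0 : A2)) (1 : ℝ)

/-! ### Endomorphisms of the free group -/

/-- The exponent-sum homomorphism of the generator `i` on `F₂`. -/
def expSum (i : A2) : FreeGroup A2 →* Multiplicative ℤ :=
  FreeGroup.lift fun j : A2 => Multiplicative.ofAdd (if j = i then (1 : ℤ) else 0)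

/-- The abelianised matrix of an endomorphism of `F₂`: entry `(i,j)` is the exponent
sum of the generator `i` in the image of the generator `j`. -/
def abelMatrix (σ : Monoid.End (FreeGroup A2)) : Matrix (Fin 2) (Fin 2) ℤ :=
  fun i j => Multiplicative.toAdd (expSum i (σ (FreeGroup.of j)))

/-- `wprod ρ w k = w · ρ(w) · ρ²(w) ⋯ ρ^{k−1}(w)`. -/
def wprod (ρ : Monoid.End (FreeGroup A2)) (w : FreeGroup A2) : ℕ → FreeGroup A2
  | 0 => 1
  | k + 1 => wprod ρ w k * (ρ ^ k) w

end TwoSubst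


/-! Raising a primitive substitution to a power does not change its language, so it suffices to
compare `τ₁ = σ^k` and `τ₂ = ρ^m`, for which `τ₁(x) w = w τ₂(x)` in `F₂`. Since `τ₁(a)` and `τ₂(a)`
are nonempty positive words, the conjugator `w` or its inverse is a positive word `p`, so
`τ₁(x) p = p τ₂(x)` (or the same with `τ₁, τ₂` exchanged) holds in the free monoid, and then
`τ₁ⁿ(x) q = q τ₂ⁿ(x)` for some word `q`. By primitivity any letter `i` occurs in a word `y` of the
language of `τ₂` with at least `|q|` letters on either side, and the factor `τ₁ⁿ(i)` of `τ₁ⁿ(y)`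
then survives in `τ₂ⁿ(y)` after the overlap with `q` is discarded; the other inclusion is
symmetric. -/

namespace List

variable {β : Type*}

theorem forall_mem_of_append_eq_append {U W V : List β} (hU : U ≠ []) (h : U ++ W = W ++ V) :
    ∀ x ∈ W, x ∈ U := by
  induction hn : W.length using Nat.strong_induction_on generalizing W with
  | _ n ih =>
  have hUW : U <+: W ++ V := h ▸ prefix_append U W
  rcases le_total W.length U.length with hle | hle
  · exact (prefix_of_prefix_length_le (prefix_append W V) hUW hle).subset
  · obtain ⟨W', rfl⟩ := prefix_of_prefix_length_le hUW (prefix_append W V) hle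
    have h' : U ++ W' = W' ++ V := by simpa using h
    have hlt : W'.length < n := by
      rw [← hn, length_append]
      have := length_pos_iff.2 hU
      omega
    intro x hx
    rcases mem_append.1 hx with hx | hx
    · exact hx
    · exact ih _ hlt h' rfl x hx

theorem IsInfix.of_append_eq_append_of_le {X Y q s w t : List β} (h : X ++ q = q ++ Y)
    (hX : s ++ w ++ t = X) (hq : q.length ≤ s.length) : w <:+: Y := by
  refine ⟨s.drop q.length, t ++ q, ?_⟩
  have := congrArg (drop q.length) h
  rw [drop_left, ← hX, append_assoc, append_assoc, drop_append_of_le_length hq] at this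
  simpa using this

theorem IsInfix.of_append_eq_append_of_le' {X Y q s w t : List β} (h : X ++ q = q ++ Y)
    (hY : s ++ w ++ t = Y) (hq : q.length ≤ t.length) : w <:+: X := by
  rw [← reverse_infix]
  refine of_append_eq_append_of_le (X := Y.reverse) (q := q.reverse) (s := t.reverse)
    (t := s.reverse) ?_ ?_ (by simpa using hq)
  · simpa using (congrArg List.reverse h).symm
  · simp [← hY]

end List

namespace FreeGroup

variable {α : Type*}

theorem isReduced_map_true (U : List α) : IsReduced (U.map (·, true)) := by
  simpa [IsReduced, List.isChain_map] using (List.pairwise_of_forall fun _ _ => trivial).isChain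

theorem isReduced_append_of_snd {L L' : List (α × Bool)} (h : IsReduced L) (h' : IsReduced L')
    (hL : ∀ x ∈ L.getLast?, x.2 = true) (hL' : ∀ y ∈ L'.head?, y.2 = true) :
    IsReduced (L ++ L') :=
  List.isChain_append.2 ⟨h, h', fun x hx y hy _ => (hL x hx).trans (hL' y hy).symm⟩

theorem prod_map_of (U : List α) : (U.map of).prod = mk (U.map (·, true)) := by
  induction U with
  | nil => rfl
  | cons a U ih => simp [ih, of, mul_mk]

theorem toWord_prod_map_of [DecidableEq α] (U : List α) :
    ((U.map of).prod).toWord = U.map (·, true) := by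
  rw [prod_map_of, toWord_mk, (isReduced_map_true U).reduce_eq]

theorem length_eq_of_prod_mul_eq {U V : List α} {w : FreeGroup α}
    (h : (U.map of).prod * w = w * (V.map of).prod) : U.length = V.length := by
  let φ : FreeGroup α →* Multiplicative ℤ := lift fun _ => .ofAdd 1
  have hφ (U : List α) : φ (U.map of).prod = .ofAdd (U.length : ℤ) := by
    simp [φ, map_list_prod, Function.comp_def, ← ofAdd_nsmul]
  have := congrArg φ h
  rw [_root_.map_mul, _root_.map_mul, mul_comm (φ w), mul_right_cancel_iff, hφ, hφ] at this
  exact_mod_cast Multiplicative.ofAdd.injective this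

theorem toWord_append_eq_of_mul_eq [DecidableEq α] {a b c d : FreeGroup α} (h : a * b = c * d)
    (hlen : c.toWord.length + d.toWord.length ≤ a.toWord.length + b.toWord.length)
    (hred : IsReduced (a.toWord ++ b.toWord)) : a.toWord ++ b.toWord = c.toWord ++ d.toWord := by
  have hab : (a * b).toWord = a.toWord ++ b.toWord := by rw [toWord_mul, hred.reduce_eq]
  refine (hab ▸ h ▸ toWord_mul_sublist c d).eq_of_length_le ?_
  simpa using hlen

theorem exists_prod_map_of_eq_of_append_eq [DecidableEq α] {U V : List α} {w : FreeGroup α}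
    (hU : U ≠ []) (h : U.map (·, true) ++ w.toWord = w.toWord ++ V.map (·, true)) :
    ∃ p : List α, (p.map of).prod = w := by
  have hpos : ∀ x ∈ w.toWord, x.2 = true := fun x hx => by
    obtain ⟨_, _, rfl⟩ := List.mem_map.1 (List.forall_mem_of_append_eq_append (by simpa) h x hx)
    rfl
  refine ⟨w.toWord.map Prod.fst, ?_⟩
  rw [prod_map_of, List.map_map]
  conv_rhs => rw [← mk_toWord (x := w), ← List.map_id w.toWord]
  exact congrArg mk (List.map_congr_left fun x hx => by simp [← hpos x hx])

theorem exists_prod_map_of_eq_or_eq_inv [DecidableEq α] {U V : List α} {w : FreeGroup α}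
    (hU : U ≠ []) (h : (U.map of).prod * w = w * (V.map of).prod) :
    ∃ p : List α, (p.map of).prod = w ∨ (p.map of).prod = w⁻¹ := by
  have hlen := length_eq_of_prod_mul_eq h
  -- If the reduced word of `w` starts with a positive letter, then `U * w` is already reduced and
  -- the length count forces `U ++ w = w ++ V` letter by letter; otherwise `w⁻¹ * U` is reduced.
  by_cases hhead : ∀ y ∈ w.toWord.head?, y.2 = true
  · have hred : IsReduced (((U.map of).prod).toWord ++ w.toWord) := by
      refine isReduced_append_of_snd isReduced_toWord isReduced_toWord ?_ hhead
      simp [toWord_prod_map_of]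
    have := toWord_append_eq_of_mul_eq h (by simp [toWord_prod_map_of, hlen, add_comm]) hred
    rw [toWord_prod_map_of, toWord_prod_map_of] at this
    obtain ⟨p, hp⟩ := exists_prod_map_of_eq_of_append_eq hU this
    exact ⟨p, .inl hp⟩
  · have h' : w⁻¹ * (U.map of).prod = (V.map of).prod * w⁻¹ := by
      rw [eq_mul_inv_iff_mul_eq, mul_assoc, h, ← mul_assoc, inv_mul_cancel, one_mul]
    have hred : IsReduced (w⁻¹.toWord ++ ((U.map of).prod).toWord) := by
      refine isReduced_append_of_snd isReduced_toWord isReduced_toWord ?_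
        (by simp [toWord_prod_map_of])
      obtain ⟨⟨g, b⟩, hy, hb⟩ := not_forall₂.1 hhead
      obtain rfl : b = false := by simpa using hb
      simp [toWord_inv, invRev, List.getLast?_reverse, Option.mem_def.1 hy]
    have := toWord_append_eq_of_mul_eq h' (by simp [toWord_prod_map_of, hlen, add_comm]) hred
    rw [toWord_prod_map_of, toWord_prod_map_of] at this
    have hV : V ≠ [] := by simpa [← List.length_pos_iff, ← hlen] using hU
    obtain ⟨p, hp⟩ := exists_prod_map_of_eq_of_append_eq hV this.symm
    exact ⟨p, .inr hp⟩

end FreeGroup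

namespace TwoSubst

open List

section Words

variable {σ : Subst}

theorem apply_nil (σ : Subst) : apply σ [] = [] := rfl

theorem apply_append (σ : Subst) (u v : List A2) :
    apply σ (u ++ v) = apply σ u ++ apply σ v :=
  flatMap_append

theorem apply_cons (σ : Subst) (i : A2) (u : List A2) : apply σ (i :: u) = σ i ++ apply σ u :=
  flatMap_cons

theorem apply_comp (σ τ : Subst) (w : List A2) : apply (comp σ τ) w = apply σ (apply τ w) :=
  flatMap_assoc.symm

theorem substPow_succ (σ : Subst) (n : ℕ) : substPow σ (n + 1) = comp σ (substPow σ n) :=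
  funext fun _ => Function.iterate_succ_apply' _ _ _

theorem apply_substPow (σ : Subst) (n : ℕ) : apply (substPow σ n) = (apply σ)^[n] := by
  funext w
  induction n with
  | zero => exact flatMap_singleton' w
  | succ n ih => rw [substPow_succ, apply_comp, ih, Function.iterate_succ_apply']

theorem substPow_add (σ : Subst) (m n : ℕ) :
    substPow σ (m + n) = comp (substPow σ m) (substPow σ n) := by
  funext i
  simp only [comp, apply_substPow]
  exact Function.iterate_add_apply _ m n [i]

theorem substPow_substPow (σ : Subst) (k n : ℕ) :
    substPow (substPow σ k) n = substPow σ (k * n) := by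
  funext i
  simp only [substPow, apply_substPow, Function.iterate_mul]

theorem infix_apply_of_mem {i : A2} {w : List A2} (h : i ∈ w) (σ : Subst) :
    σ i <:+: apply σ w :=
  infix_flatMap_of_mem h σ

theorem mul_length_le_length_apply {c : ℕ} (h : ∀ i, c ≤ (σ i).length) (w : List A2) :
    c * w.length ≤ (apply σ w).length := by
  induction w with
  | nil => simp [apply_nil]
  | cons i w ih =>
    rw [apply_cons, length_append, length_cons, mul_add, mul_one]
    have := h i
    omega

theorem NonErasing.length_le_length_apply (h : NonErasing σ) (w : List A2) :
    w.length ≤ (apply σ w).length := by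
  simpa using mul_length_le_length_apply (fun i => length_pos_iff.2 (h i)) w

theorem nonErasing_substPow (h : NonErasing σ) (n : ℕ) : NonErasing (substPow σ n) := by
  induction n with
  | zero => exact fun i => cons_ne_nil i []
  | succ n ih =>
    intro i
    rw [substPow_succ, ← length_pos_iff]
    exact (length_pos_iff.2 (ih i)).trans_le (h.length_le_length_apply _)

theorem pow_le_length_substPow {c : ℕ} (h : ∀ i, c ≤ (σ i).length) (n : ℕ) (j : A2) :
    c ^ n ≤ (substPow σ n j).length := by
  induction n with
  | zero => simp [substPow]
  | succ n ih =>
    rw [substPow_succ, pow_succ']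
    exact (Nat.mul_le_mul_left c ih).trans (mul_length_le_length_apply h _)

end Words

section Primitive

variable {σ : Subst}

theorem count_apply (σ : Subst) (w : List A2) (i : A2) :
    (apply σ w).count i = ∑ j, (σ j).count i * w.count j := by
  induction w with
  | nil => simp [apply_nil]
  | cons c w ih =>
    rw [apply_cons, count_append, ih]
    fin_cases c <;> simp [count_cons, Fin.sum_univ_two] <;> ring

theorem M_comp (σ τ : Subst) : M (comp σ τ) = M σ * M τ := by
  ext i j
  simp [M, comp, count_apply, Matrix.mul_apply]

theorem M_substPow (σ : Subst) (n : ℕ) : M (substPow σ n) = M σ ^ n := by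
  induction n with
  | zero =>
    ext i j
    fin_cases i <;> fin_cases j <;> rfl
  | succ n ih => rw [substPow_succ, M_comp, ih, pow_succ']

theorem primitive_iff : Primitive σ ↔ ∃ n, 0 < n ∧ ∀ i j, i ∈ substPow σ n j := by
  simp only [Primitive, ← M_substPow, M, Nat.cast_pos, count_pos_iff]

theorem Primitive.nonErasing (h : Primitive σ) : NonErasing σ := by
  obtain ⟨n, hn, hmem⟩ := primitive_iff.1 h
  intro j hj
  obtain ⟨m, rfl⟩ := Nat.exists_eq_succ_of_ne_zero hn.ne'
  have : substPow σ (m + 1) j = [] := by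
    rw [substPow_add σ m 1]
    simp [comp, substPow, apply, hj]
  simpa [this] using hmem 0 j

theorem Primitive.exists_forall_ge_mem (h : Primitive σ) :
    ∃ n₀, ∀ n ≥ n₀, ∀ i j, i ∈ substPow σ n j := by
  obtain ⟨n₀, -, hmem⟩ := primitive_iff.1 h
  refine ⟨n₀, fun n hn i j => ?_⟩
  obtain ⟨m, rfl⟩ := Nat.exists_eq_add_of_le hn
  obtain ⟨c, hc⟩ := exists_mem_of_ne_nil _ (nonErasing_substPow h.nonErasing m j)
  rw [substPow_add]
  exact (infix_apply_of_mem hc _).subset (hmem i c)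

theorem primitive_substPow (h : Primitive σ) {k : ℕ} (hk : 0 < k) :
    Primitive (substPow σ k) := by
  obtain ⟨n₀, hn₀⟩ := h.exists_forall_ge_mem
  refine primitive_iff.2 ⟨n₀ + 1, n₀.succ_pos, fun i j => ?_⟩
  rw [substPow_substPow]
  exact hn₀ _ (by nlinarith) i j

theorem Primitive.exists_substPow_eq_append_cons (h : Primitive σ) (P : ℕ) (i : A2) :
    ∃ m j y₁ y₂, substPow σ m j = y₁ ++ i :: y₂ ∧ P ≤ y₁.length ∧ P ≤ y₂.length := by
  obtain ⟨N, hN⟩ := h.exists_forall_ge_mem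
  have hmem := hN N le_rfl
  have hτ : NonErasing (substPow σ N) := nonErasing_substPow h.nonErasing N
  have htwo (j : A2) : 2 ≤ (substPow σ N j).length := by
    simpa using (Finset.card_le_card (s := .univ) fun x _ => mem_toFinset.2 (hmem x j)).trans
      (toFinset_card_le _)
  have hz : 2 * P + 1 < (substPow σ (N * (2 * P + 1)) 0).length := by
    rw [← substPow_substPow]
    exact Nat.lt_two_pow_self.trans_le (pow_le_length_substPow htwo _ 0)
  set z := substPow σ (N * (2 * P + 1)) 0
  obtain ⟨u, v, huv⟩ := append_of_mem (hmem i z[P])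
  refine ⟨N + N * (2 * P + 1), 0, apply (substPow σ N) (z.take P) ++ u,
    v ++ apply (substPow σ N) (z.drop (P + 1)), ?_, ?_, ?_⟩
  · rw [substPow_add]
    change apply (substPow σ N) z = _
    have hsplit : z = z.take P ++ z[P] :: z.drop (P + 1) := by
      rw [← drop_eq_getElem_cons, take_append_drop]
    conv_lhs => rw [hsplit]
    simp only [apply_append, apply_cons, huv, append_assoc, cons_append]
  · have := hτ.length_le_length_apply (z.take P)
    simp only [length_append, length_take] at this ⊢
    omega
  · have := hτ.length_le_length_apply (z.drop (P + 1))
    simp only [length_append, length_drop] at this ⊢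
    omega

end Primitive

section Language

variable {σ : Subst}

def language (σ : Subst) : Set (List A2) := {w | ∃ n x, w <:+: substPow σ n x}

theorem hull_eq_of_language_eq {ρ : Subst} (h : language σ = language ρ) :
    Hull σ = Hull ρ := by
  ext u
  exact forall₂_congr fun w _ => Set.ext_iff.1 h w

theorem Primitive.language_substPow (h : Primitive σ) {k : ℕ} (hk : 0 < k) :
    language (substPow σ k) = language σ := by
  ext w
  constructor
  · rintro ⟨n, x, hw⟩
    exact ⟨k * n, x, substPow_substPow σ k n ▸ hw⟩
  · rintro ⟨n, x, hw⟩
    obtain ⟨n₀, hn₀⟩ := h.exists_forall_ge_mem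
    obtain ⟨m, hm⟩ := Nat.exists_eq_add_of_le (show n ≤ k * (n + n₀) by nlinarith)
    refine ⟨n + n₀, 0, hw.trans ?_⟩
    rw [substPow_substPow, hm, substPow_add]
    exact infix_apply_of_mem (hn₀ m (by nlinarith) x 0) _

end Language

section RightConj

variable {σ₁ σ₂ τ₁ τ₂ : Subst}

def RightConj (τ₁ τ₂ : Subst) (p : List A2) : Prop := ∀ i, τ₁ i ++ p = p ++ τ₂ i

theorem RightConj.apply_word {p : List A2} (h : RightConj τ₁ τ₂ p) (w : List A2) :
    apply τ₁ w ++ p = p ++ apply τ₂ w := by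
  induction w with
  | nil => simp [apply_nil]
  | cons i w ih =>
    rw [apply_cons, apply_cons, append_assoc, ih, ← append_assoc, h i, append_assoc]

theorem RightConj.comp {p q : List A2} (hσ : RightConj σ₁ σ₂ p) (hτ : RightConj τ₁ τ₂ q) :
    RightConj (comp σ₁ τ₁) (comp σ₂ τ₂) (apply σ₁ q ++ p) := fun i => by
  simp only [TwoSubst.comp]
  rw [← append_assoc, ← apply_append, hτ i, apply_append, append_assoc, hσ.apply_word,
    append_assoc]

theorem RightConj.exists_substPow {p : List A2} (h : RightConj τ₁ τ₂ p) (n : ℕ) :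
    ∃ q, RightConj (substPow τ₁ n) (substPow τ₂ n) q := by
  induction n with
  | zero => exact ⟨[], fun i => rfl⟩
  | succ n ih =>
    obtain ⟨q, hq⟩ := ih
    rw [substPow_succ, substPow_succ]
    exact ⟨_, h.comp hq⟩

theorem RightConj.language_subset {p : List A2} (h : RightConj τ₁ τ₂ p)
    (h₁ : NonErasing τ₁) (h₂ : Primitive τ₂) : language τ₁ ⊆ language τ₂ := by
  rintro w ⟨n, i, hw⟩
  obtain ⟨q, hq⟩ := h.exists_substPow n
  obtain ⟨m, j, y₁, y₂, hy, hy₁, -⟩ := h₂.exists_substPow_eq_append_cons q.length i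
  refine ⟨n + m, j, hw.trans ?_⟩
  rw [substPow_add, TwoSubst.comp, hy]
  have hq₁ := hy₁.trans ((nonErasing_substPow h₁ n).length_le_length_apply y₁)
  refine IsInfix.of_append_eq_append_of_le (hq.apply_word _) (s := apply (substPow τ₁ n) y₁)
    (t := apply (substPow τ₁ n) y₂) ?_ hq₁
  simp [apply_append, apply_cons, append_assoc]

theorem RightConj.language_supset {p : List A2} (h : RightConj τ₁ τ₂ p)
    (h₁ : Primitive τ₁) (h₂ : NonErasing τ₂) : language τ₂ ⊆ language τ₁ := by
  rintro w ⟨n, i, hw⟩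
  obtain ⟨q, hq⟩ := h.exists_substPow n
  obtain ⟨m, j, y₁, y₂, hy, -, hy₂⟩ := h₁.exists_substPow_eq_append_cons q.length i
  refine ⟨n + m, j, hw.trans ?_⟩
  rw [substPow_add, TwoSubst.comp, hy]
  have hq₂ := hy₂.trans ((nonErasing_substPow h₂ n).length_le_length_apply y₂)
  refine IsInfix.of_append_eq_append_of_le' (hq.apply_word _) (s := apply (substPow τ₂ n) y₁)
    (t := apply (substPow τ₂ n) y₂) ?_ hq₂
  simp [apply_append, apply_cons, append_assoc]

theorem RightConj.language_eq {p : List A2} (h : RightConj τ₁ τ₂ p) (h₁ : Primitive τ₁)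
    (h₂ : Primitive τ₂) : language τ₁ = language τ₂ :=
  (h.language_subset h₁.nonErasing h₂).antisymm (h.language_supset h₁ h₂.nonErasing)

theorem toFG_append (u v : List A2) : toFG (u ++ v) = toFG u * toFG v := by
  simp [toFG]

theorem toFG_injective : Function.Injective toFG := fun u v h => by
  have := congrArg FreeGroup.toWord h
  rw [toFG, toFG, FreeGroup.toWord_prod_map_of, FreeGroup.toWord_prod_map_of] at this
  exact map_injective_iff.2 (fun a b hab => congrArg Prod.fst hab) this

theorem endo_of (τ : Subst) (i : A2) : endo τ (FreeGroup.of i) = toFG (τ i) :=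
  FreeGroup.lift_apply_of

theorem Conj.exists_rightConj (hc : Conj τ₁ τ₂) {i : A2} (hi : τ₁ i ≠ []) :
    (∃ p, RightConj τ₁ τ₂ p) ∨ ∃ p, RightConj τ₂ τ₁ p := by
  obtain ⟨w, hw⟩ := hc
  have hletter (j : A2) : toFG (τ₁ j) * w = w * toFG (τ₂ j) := by
    rw [← endo_of, ← endo_of, hw, inv_mul_cancel_right]
  obtain ⟨p, hp | hp⟩ : ∃ p, toFG p = w ∨ toFG p = w⁻¹ :=
    FreeGroup.exists_prod_map_of_eq_or_eq_inv hi (hletter i)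
  · refine .inl ⟨p, fun j => toFG_injective ?_⟩
    rw [toFG_append, toFG_append, hp, hletter]
  · refine .inr ⟨p, fun j => toFG_injective ?_⟩
    rw [toFG_append, toFG_append, hp, mul_inv_eq_iff_eq_mul, mul_assoc, hletter,
      inv_mul_cancel_left]

end RightConj

end TwoSubst

open TwoSubst in
theorem hull_eq_of_conj_pow_general (σ ρ : Subst)
    (hσ : Primitive σ) (hρ : Primitive ρ)
    (h : ∃ k m : ℕ, 1 ≤ k ∧ 1 ≤ m ∧ Conj (substPow σ k) (substPow ρ m)) :
    Hull σ = Hull ρ := by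
  obtain ⟨k, m, hk, hm, hconj⟩ := h
  have hσk := primitive_substPow hσ hk
  have hρm := primitive_substPow hρ hm
  apply hull_eq_of_language_eq
  rw [← hσ.language_substPow hk, ← hρ.language_substPow hm]
  rcases hconj.exists_rightConj (hσk.nonErasing 0) with ⟨p, hp⟩ | ⟨p, hp⟩
  · exact hp.language_eq hσk hρm
  · exact (hp.language_eq hρm hσk).symm

open TwoSubst in
/-- If `σ, ρ` are primitive substitutions on two letters and
`σ^k ~ ρ^m` for some `k, m ≥ 1`, then `X_σ = X_ρ`. -/
theorem hull_eq_of_conj_pow (σ ρ : Subst) (hneσ : NonErasing σ) (hneρ : NonErasing ρ)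
    (hσ : Primitive σ) (hρ : Primitive ρ)
    (h : ∃ k m : ℕ, 1 ≤ k ∧ 1 ≤ m ∧ Conj (substPow σ k) (substPow ρ m)) :
    Hull σ = Hull ρ :=
  hull_eq_of_conj_pow_general σ ρ hσ hρ h
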